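/- For every 3-subset U of the vertex set of the icosahedron graph I, the minimum number of cliques of the induced subgraph N_I[U] needed to cover all edges incident to U is at least 6; consequently min over 3-subsets U of θ_E(E_I[U]; N_I[U]) = 6. -/

import Mathlib

open SimpleGraph

/-- The competition graph of a digraph `D` (given as a relation): distinct vertices
`x`, `y` are adjacent iff they have a common out-neighbor in `D`. -/
def CompetitionGraph {V : Type*} (D : V → V → Prop) : SimpleGraph V where
  Adj x y := x ≠ y ∧ ∃ v, D x v ∧ D y v
  symm := ⟨by rintro x y ⟨h, v, hx, hy⟩; exact ⟨h.symm, v, hy, hx⟩⟩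
  loopless := ⟨by rintro x ⟨h, -⟩; exact h rfl⟩

/-- A digraph is acyclic iff it has no directed cycle, i.e. no vertex reaches itself
by a nonempty directed walk. -/
def DigraphAcyclic {V : Type*} (D : V → V → Prop) : Prop :=
  ∀ v, ¬ Relation.TransGen D v v

/-- The graph `G` together with `k` additional isolated vertices. -/
def addIsolated {V : Type*} (G : SimpleGraph V) (k : ℕ) : SimpleGraph (V ⊕ Fin k) where
  Adj a b := ∃ x y, a = Sum.inl x ∧ b = Sum.inl y ∧ G.Adj x y
  symm := ⟨by rintro a b ⟨x, y, rfl, rfl, h⟩; exact ⟨y, x, rfl, rfl, h.symm⟩⟩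
  loopless := ⟨by
    rintro a ⟨x, y, rfl, hy, h⟩
    obtain rfl := Sum.inl_injective hy
    exact (G.ne_of_adj h) rfl⟩

/-- `G` plus `k` isolated vertices is the competition graph of some acyclic digraph. -/
def IsCompetitionWitness {V : Type*} (G : SimpleGraph V) (k : ℕ) : Prop :=
  ∃ D : (V ⊕ Fin k) → (V ⊕ Fin k) → Prop,
    DigraphAcyclic D ∧ CompetitionGraph D = addIsolated G k

/-- The competition number of `G`: the least `k` such that `G` plus `k` isolated
vertices is the competition graph of an acyclic digraph. -/
noncomputable def compNum {V : Type*} (G : SimpleGraph V) : ℕ :=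
  sInf {k | IsCompetitionWitness G k}

/-- The generalized edge clique cover number `θ_E(F; H)`: the minimum number of cliques
of `G` contained in the vertex set `H` (i.e. cliques of the induced subgraph on `H`)
needed so that every edge in `F` has both endpoints in some clique of the family. -/
noncomputable def thetaEOn {V : Type*} (G : SimpleGraph V) (F : Set (Sym2 V)) (H : Set V) : ℕ :=
  sInf {n | ∃ f : Fin n → Set V,
    (∀ i, f i ⊆ H ∧ G.IsClique (f i)) ∧ ∀ e ∈ F, ∃ i, ∀ x ∈ e, x ∈ f i}

/-- The edge clique cover number `θ_E(G)`. -/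
noncomputable def thetaE {V : Type*} (G : SimpleGraph V) : ℕ :=
  thetaEOn G G.edgeSet Set.univ

/-- The vertex clique cover number of the subgraph of `G` induced on `S`: the minimum
number of cliques of `G` contained in `S` whose union covers `S`. -/
noncomputable def thetaVOn {V : Type*} (G : SimpleGraph V) (S : Set V) : ℕ :=
  sInf {n | ∃ f : Fin n → Set V,
    (∀ i, f i ⊆ S ∧ G.IsClique (f i)) ∧ ∀ v ∈ S, ∃ i, v ∈ f i}

/-- The closed neighborhood `N_G[U]` of a vertex subset. -/
def closedNbhd {V : Type*} (G : SimpleGraph V) (U : Set V) : Set V :=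
  U ∪ {v | ∃ u ∈ U, G.Adj u v}

/-- The set `E_G[U]` of edges of `G` with at least one endpoint in `U`. -/
def incidentEdges {V : Type*} (G : SimpleGraph V) (U : Set V) : Set (Sym2 V) :=
  {e | e ∈ G.edgeSet ∧ ∃ x ∈ e, x ∈ U}

/-- The edge list of the icosahedron graph (pentagonal antiprism on `1..10` together
with apexes `0` and `11`). -/
def icosaEdges : List (ℕ × ℕ) :=
  [(0,1),(0,2),(0,3),(0,4),(0,5),(1,2),(2,3),(3,4),(4,5),(5,1),
   (11,6),(11,7),(11,8),(11,9),(11,10),(6,7),(7,8),(8,9),(9,10),(10,6),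
   (1,6),(1,7),(2,7),(2,8),(3,8),(3,9),(4,9),(4,10),(5,10),(5,6)]

/-- The icosahedron graph: the 5-regular graph on 12 vertices with 30 edges
arising as the 1-skeleton of the icosahedron. -/
def Icosahedron : SimpleGraph (Fin 12) :=
  SimpleGraph.fromRel (fun i j => ((i : ℕ), (j : ℕ)) ∈ icosaEdges)

/-! Every clique of the icosahedron has at most three vertices, so a clique through an edge `xy`
lies in `{x, y}` or in `{x, y, t}` for a common neighbour `t`. Given a cover by `n` cliques, the
clique covering the first edge can therefore be enlarged to such a candidate, and the remaining
edges not inside it are covered by the other `n - 1` cliques. So if a search branching only over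
these candidates finds no cover, there is none; it finds no cover of `E_I[U]` by five cliques for
any of the 220 triples `U`. It ignores the requirement that the cliques lie in `N_I[U]`, which
only strengthens the lower bound. For the face `U = {0, 1, 2}` six triangles cover `E_I[U]`. -/

section CliqueCover

variable {V : Type*} {G : SimpleGraph V}

theorem thetaEOn_le {F : Set (Sym2 V)} {H : Set V} {n : ℕ} (f : Fin n → Set V)
    (hf : ∀ i, f i ⊆ H ∧ G.IsClique (f i)) (hcov : ∀ e ∈ F, ∃ i, ∀ x ∈ e, x ∈ f i) :
    thetaEOn G F H ≤ n :=
  Nat.sInf_le ⟨f, hf, hcov⟩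

theorem exists_cliqueCover_of_finite {F : Set (Sym2 V)} {H : Set V} (hF : F.Finite)
    (hFG : F ⊆ G.edgeSet) (hFH : ∀ e ∈ F, ∀ x ∈ e, x ∈ H) :
    ∃ n, ∃ f : Fin n → Set V, (∀ i, f i ⊆ H ∧ G.IsClique (f i)) ∧
      ∀ e ∈ F, ∃ i, ∀ x ∈ e, x ∈ f i := by
  classical
  let l := hF.toFinset.toList
  have hl : ∀ i : Fin l.length, l.get i ∈ F := fun i => hF.mem_toFinset.1 <|
    Finset.mem_toList.1 (List.get_mem l i)
  refine ⟨l.length, fun i => {x | x ∈ l.get i}, fun i => ⟨fun x hx => hFH _ (hl i) x hx, ?_⟩, ?_⟩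
  · exact fun x hx y hy hxy => G.adj_iff_exists_edge.2 ⟨hxy, _, hFG (hl i), hx, hy⟩
  · intro e he
    obtain ⟨i, rfl⟩ := List.mem_iff_get.1 (Finset.mem_toList.2 (hF.mem_toFinset.2 he))
    exact ⟨i, fun x hx => hx⟩

theorem mem_closedNbhd_of_mem_incidentEdges {U : Set V} {e : Sym2 V}
    (he : e ∈ incidentEdges G U) {x : V} (hx : x ∈ e) : x ∈ closedNbhd G U := by
  obtain ⟨he, u, hu, huU⟩ := he
  by_cases hxu : x = u
  · exact Or.inl (hxu ▸ huU)
  · exact Or.inr ⟨u, huU, G.adj_iff_exists_edge.2 ⟨Ne.symm hxu, e, he, hu, hx⟩⟩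

theorem SimpleGraph.CliqueFree.eq_or_eq_or_eq_of_isClique (hG : G.CliqueFree 4) {C : Set V}
    (hC : G.IsClique C) {x y t z : V} (hx : x ∈ C) (hy : y ∈ C) (ht : t ∈ C) (hz : z ∈ C)
    (hxy : x ≠ y) (hxt : x ≠ t) (hyt : y ≠ t) : z = x ∨ z = y ∨ z = t := by
  classical
  by_contra! hzn
  obtain ⟨hzx, hzy, hzt⟩ := hzn
  refine hG {x, y, t, z} ⟨hC.subset ?_, ?_⟩
  · intro v hv
    simp only [Finset.coe_insert, Finset.coe_singleton, Set.mem_insert_iff,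
      Set.mem_singleton_iff] at hv
    rcases hv with rfl | rfl | rfl | rfl <;> assumption
  · simp [Finset.card_insert_of_notMem, *, Ne.symm hzx, Ne.symm hzy, Ne.symm hzt]

theorem SimpleGraph.cliqueFree_four_of_forall
    (hG : ∀ a b c d, G.Adj a b → G.Adj a c → G.Adj a d → G.Adj b c → G.Adj b d → ¬G.Adj c d) :
    G.CliqueFree 4 := by
  classical
  intro s hs
  obtain ⟨a, t, hat, rfl, ht⟩ := Finset.card_eq_succ.1 hs.card_eq
  obtain ⟨b, c, d, hbc, hbd, hcd, rfl⟩ := Finset.card_eq_three.1 ht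
  simp only [Finset.mem_insert, Finset.mem_singleton, not_or] at hat
  obtain ⟨hab, hac, had⟩ := hat
  have hs' := hs.isClique
  simp only [Finset.coe_insert, Finset.coe_singleton, isClique_insert, Set.mem_insert_iff,
    Set.mem_singleton_iff, forall_eq_or_imp, forall_eq, ne_eq, hab, hac, had, hbc, hbd, hcd,
    not_false_eq_true, forall_const, isClique_singleton, true_and] at hs'
  exact hG a b c d hs'.2.1 hs'.2.2.1 hs'.2.2.2 hs'.1.2.1 hs'.1.2.2 hs'.1.1

end CliqueCover

section CliqueCoverSearch

variable {V : Type*} [DecidableEq V] (G : SimpleGraph V) [DecidableRel G.Adj]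

def edgeCliqueCandidates (vs : List V) (x y : V) : List (List V) :=
  [x, y] :: (vs.filter fun t => G.Adj t x ∧ G.Adj t y).map fun t => [x, y, t]

def cliqueCoverSearch (vs : List V) : ℕ → List (V × V) → Bool
  | _, [] => true
  | 0, _ :: _ => false
  | n + 1, (x, y) :: rest => (edgeCliqueCandidates G vs x y).any fun D =>
      cliqueCoverSearch vs n (rest.filter fun e => !(e.1 ∈ D ∧ e.2 ∈ D))

def incidentEdgeList (vs : List V) (U : Finset V) : List (V × V) :=
  (vs ×ˢ vs).filter fun e => G.Adj e.1 e.2 ∧ (e.1 ∈ U ∨ e.2 ∈ U)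

variable {G}

theorem exists_edgeCliqueCandidates_superset (hG : G.CliqueFree 4) {vs : List V}
    (hvs : ∀ v, v ∈ vs) {C : Set V} (hC : G.IsClique C) {x y : V} (hx : x ∈ C) (hy : y ∈ C)
    (hxy : x ≠ y) : ∃ D ∈ edgeCliqueCandidates G vs x y, ∀ v ∈ C, v ∈ D := by
  by_cases hthird : ∃ t ∈ C, t ≠ x ∧ t ≠ y
  · obtain ⟨t, ht, htx, hty⟩ := hthird
    refine ⟨[x, y, t], List.mem_cons_of_mem _ <| List.mem_map.2 ⟨t, ?_, rfl⟩, fun z hz => ?_⟩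
    · exact List.mem_filter.2 ⟨hvs t, by simpa using ⟨hC ht hx htx, hC ht hy hty⟩⟩
    · rcases hG.eq_or_eq_or_eq_of_isClique hC hx hy ht hz hxy htx.symm hty.symm
        with rfl | rfl | rfl <;> simp
  · push Not at hthird
    refine ⟨[x, y], List.mem_cons_self, fun z hz => ?_⟩
    by_cases hzx : z = x
    · simp [hzx]
    · simp [hthird z hz hzx]

theorem cliqueCoverSearch_eq_true_of_cover (hG : G.CliqueFree 4) {vs : List V}
    (hvs : ∀ v, v ∈ vs) : ∀ {n : ℕ} {L : List (V × V)} {T : List (Set V)}, T.length ≤ n →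
      (∀ C ∈ T, G.IsClique C) → (∀ e ∈ L, e.1 ≠ e.2) →
      (∀ e ∈ L, ∃ C ∈ T, e.1 ∈ C ∧ e.2 ∈ C) → cliqueCoverSearch G vs n L = true
  | _, [], _, _, _, _, _ => by simp [cliqueCoverSearch]
  | 0, e :: _, T, hlen, _, _, hcov => by
    obtain ⟨C, hC, -⟩ := hcov e List.mem_cons_self
    simp [List.length_eq_zero_iff.1 (Nat.le_zero.1 hlen)] at hC
  | n + 1, (x, y) :: rest, T, hlen, hT, hne, hcov => by
    obtain ⟨C, hCT, hx, hy⟩ := hcov (x, y) List.mem_cons_self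
    obtain ⟨D, hD, hCD⟩ :=
      exists_edgeCliqueCandidates_superset hG hvs (hT C hCT) hx hy (hne _ List.mem_cons_self)
    rw [cliqueCoverSearch, List.any_eq_true]
    refine ⟨D, hD, cliqueCoverSearch_eq_true_of_cover hG hvs (T := T.erase C) ?_
      (fun C' hC' => hT C' (List.mem_of_mem_erase hC'))
      (fun e he => hne e (List.mem_cons_of_mem _ (List.mem_filter.1 he).1)) ?_⟩
    · rw [List.length_erase_of_mem hCT]
      omega
    · intro e he
      obtain ⟨he, hnotD⟩ := List.mem_filter.1 he
      obtain ⟨C', hC', h1, h2⟩ := hcov e (List.mem_cons_of_mem _ he)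
      have hC'C : C' ≠ C := by
        rintro rfl
        simp [hCD _ h1, hCD _ h2] at hnotD
      exact ⟨C', (List.mem_erase_of_ne hC'C).2 hC', h1, h2⟩

theorem le_thetaEOn_of_cliqueCoverSearch_eq_false (hG : G.CliqueFree 4) {vs : List V}
    (hvs : ∀ v, v ∈ vs) {F : Set (Sym2 V)} {H : Set V} {L : List (V × V)} {k : ℕ}
    (hcover : ∃ n, ∃ f : Fin n → Set V, (∀ i, f i ⊆ H ∧ G.IsClique (f i)) ∧
      ∀ e ∈ F, ∃ i, ∀ x ∈ e, x ∈ f i)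
    (hL : ∀ e ∈ L, G.Adj e.1 e.2 ∧ s(e.1, e.2) ∈ F) (hsearch : cliqueCoverSearch G vs k L = false) :
    k + 1 ≤ thetaEOn G F H := by
  refine le_csInf hcover ?_
  rintro n ⟨f, hf, hcov⟩
  by_contra! hn
  have hT : ∀ C ∈ List.ofFn f, G.IsClique C := by
    simp only [List.mem_ofFn, forall_exists_index]
    rintro _ i rfl
    exact (hf i).2
  refine Bool.false_ne_true (hsearch ▸ cliqueCoverSearch_eq_true_of_cover hG hvs
    (by simpa using Nat.le_of_lt_succ hn) hT (fun e he => (hL e he).1.ne) fun e he => ?_)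
  obtain ⟨i, hi⟩ := hcov _ (hL e he).2
  exact ⟨f i, List.mem_ofFn.2 ⟨i, rfl⟩, hi _ (Sym2.mem_mk_left _ _), hi _ (Sym2.mem_mk_right _ _)⟩

theorem mk_mem_incidentEdgeList_iff {vs : List V} (hvs : ∀ v, v ∈ vs) {U : Finset V} {x y : V} :
    (x, y) ∈ incidentEdgeList G vs U ↔ s(x, y) ∈ incidentEdges G ↑U := by
  simp [incidentEdgeList, incidentEdges, hvs]

theorem le_thetaEOn_incidentEdges_of_cliqueCoverSearch_eq_false [Finite V] (hG : G.CliqueFree 4)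
    {vs : List V} (hvs : ∀ v, v ∈ vs) {U : Finset V} {k : ℕ}
    (hsearch : cliqueCoverSearch G vs k (incidentEdgeList G vs U) = false) :
    k + 1 ≤ thetaEOn G (incidentEdges G ↑U) (closedNbhd G ↑U) := by
  refine le_thetaEOn_of_cliqueCoverSearch_eq_false hG hvs ?_ (fun e he => ?_) hsearch
  · exact exists_cliqueCover_of_finite (Set.toFinite _) (fun e he => he.1)
      fun e he x hx => mem_closedNbhd_of_mem_incidentEdges he hx
  · have he' := (mk_mem_incidentEdgeList_iff hvs).1 he
    exact ⟨he'.1, he'⟩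

end CliqueCoverSearch

theorem Finset.exists_lt_lt_eq_of_card_eq_three {α : Type*} [LinearOrder α] {s : Finset α}
    (h : s.card = 3) : ∃ a b c, a < b ∧ b < c ∧ s = {a, b, c} := by
  refine ⟨s.orderEmbOfFin h 0, s.orderEmbOfFin h 1, s.orderEmbOfFin h 2, by simp, by simp, ?_⟩
  ext x
  rw [← Finset.mem_coe, ← s.range_orderEmbOfFin h, Set.mem_range]
  simp only [Fin.exists_fin_succ, Fin.exists_fin_zero, Finset.mem_insert, Finset.mem_singleton]
  grind

instance : DecidableRel Icosahedron.Adj := fun x y =>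
  decidable_of_iff _ (SimpleGraph.fromRel_adj _ x y).symm

set_option synthInstance.maxSize 2000 in
theorem icosahedron_cliqueFree_four : Icosahedron.CliqueFree 4 :=
  SimpleGraph.cliqueFree_four_of_forall (by decide)

set_option maxRecDepth 10000 in
theorem cliqueCoverSearch_icosahedron_eq_false : ∀ a b c : Fin 12, a < b → b < c →
    cliqueCoverSearch Icosahedron (List.finRange 12) 5
      (incidentEdgeList Icosahedron (List.finRange 12) {a, b, c}) = false := by
  decide +kernel

def icosahedronFaceCover : Fin 6 → Finset (Fin 12) :=
  ![{0, 1, 2}, {0, 3, 4}, {0, 1, 5}, {1, 6, 7}, {2, 3, 8}, {2, 7, 8}]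

set_option maxRecDepth 10000 in
theorem thetaEOn_icosahedron_face_le_six :
    thetaEOn Icosahedron (incidentEdges Icosahedron ↑({0, 1, 2} : Finset (Fin 12)))
      (closedNbhd Icosahedron ↑({0, 1, 2} : Finset (Fin 12))) ≤ 6 := by
  refine thetaEOn_le (fun i => ↑(icosahedronFaceCover i)) (fun i => ⟨fun v hv => ?_, ?_⟩) ?_
  · have hnbhd : ∀ i, ∀ v ∈ icosahedronFaceCover i, v ∈ ({0, 1, 2} : Finset (Fin 12)) ∨
        ∃ u ∈ ({0, 1, 2} : Finset (Fin 12)), Icosahedron.Adj u v := by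
      decide
    exact hnbhd i v hv
  · have hclique : ∀ i, Icosahedron.IsClique (icosahedronFaceCover i : Set (Fin 12)) := by
      decide
    exact hclique i
  · have hcov : ∀ e ∈ incidentEdgeList Icosahedron (List.finRange 12) {0, 1, 2},
        ∃ i, e.1 ∈ icosahedronFaceCover i ∧ e.2 ∈ icosahedronFaceCover i := by
      decide
    intro e he
    induction e using Sym2.ind with
    | _ x y =>
    obtain ⟨i, hx, hy⟩ := hcov (x, y) ((mk_mem_incidentEdgeList_iff List.mem_finRange).2 he)
    refine ⟨i, fun z hz => ?_⟩
    rcases Sym2.mem_iff.1 hz with rfl | rfl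
    · exact hx
    · exact hy

theorem icosahedron_local_edge_cover_bound :
    (∀ U : Finset (Fin 12), U.card = 3 →
      6 ≤ thetaEOn Icosahedron (incidentEdges Icosahedron (↑U : Set (Fin 12)))
            (closedNbhd Icosahedron (↑U : Set (Fin 12)))) ∧
    sInf ((fun U : Finset (Fin 12) =>
        thetaEOn Icosahedron (incidentEdges Icosahedron (↑U : Set (Fin 12)))
          (closedNbhd Icosahedron (↑U : Set (Fin 12)))) ''
      {U : Finset (Fin 12) | U.card = 3}) = 6 := by
  have lower : ∀ U : Finset (Fin 12), U.card = 3 →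
      6 ≤ thetaEOn Icosahedron (incidentEdges Icosahedron ↑U) (closedNbhd Icosahedron ↑U) := by
    intro U hU
    obtain ⟨a, b, c, hab, hbc, rfl⟩ := Finset.exists_lt_lt_eq_of_card_eq_three hU
    exact le_thetaEOn_incidentEdges_of_cliqueCoverSearch_eq_false icosahedron_cliqueFree_four
      List.mem_finRange (cliqueCoverSearch_icosahedron_eq_false a b c hab hbc)
  have hface : ({0, 1, 2} : Finset (Fin 12)) ∈ {U : Finset (Fin 12) | U.card = 3} := rfl
  refine ⟨lower, le_antisymm ?_ ?_⟩
  · exact (Nat.sInf_le (Set.mem_image_of_mem _ hface)).trans thetaEOn_icosahedron_face_le_six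
  · exact le_csInf ⟨_, Set.mem_image_of_mem _ hface⟩ (by rintro _ ⟨U, hU, rfl⟩; exact lower U hU)
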